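/- Given an L-fuzzy interior operator ℐ : L^X × L → L^X, the map 𝒯 : L^X → L defined by 𝒯(f) = ⨆ { α ∈ L ∣ f ≤ ℐ(f, α) } satisfies 𝒯(1_X) = ⊤ and 𝒯(f) ⊗ 𝒯(g) ≤ 𝒯(f ⊗ g) for all f, g ∈ L^X. -/
import Mathlib


theorem stmt_19 {L : Type*} [CompleteLattice L]
    (mul : L → L → L)
    (mul_comm : ∀ a b : L, mul a b = mul b a)
    (mul_assoc : ∀ a b c : L, mul (mul a b) c = mul a (mul b c))
    (mul_sSup : ∀ (a : L) (S : Set L), mul a (sSup S) = ⨆ b ∈ S, mul a b)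
    (top_mul : ∀ a : L, mul ⊤ a = a)
    {X : Type*}
    (I : (X → L) → L → (X → L))
    (hI1 : ∀ α : L, I (fun _ => ⊤) α = fun _ => ⊤)
    (hI2 : ∀ (f g : X → L) (α β : L), g ≤ f → α ≤ β → I g β ≤ I f α)
    (hI3 : ∀ (f g : X → L) (α β : L),
      (fun x => mul (I f α x) (I g β x)) ≤ I (fun x => mul (f x) (g x)) (mul α β))
    (hI4 : ∀ (f : X → L) (α : L), I f α ≤ f)
    (hI7 : ∀ (f : X → L) (K : Set L), K.Nonempty →
      (∀ α ∈ K, f ≤ I f α) → f ≤ I f (sSup K)) :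
    (sSup {α : L | (fun _ : X => (⊤ : L)) ≤ I (fun _ => ⊤) α} = ⊤) ∧
    (∀ f g : X → L,
      mul (sSup {α : L | f ≤ I f α}) (sSup {α : L | g ≤ I g α}) ≤
        sSup {α : L | (fun x => mul (f x) (g x)) ≤ I (fun x => mul (f x) (g x)) α}) := by
  constructor
  · apply le_antisymm le_top
    apply le_sSup
    show (fun _ : X => (⊤ : L)) ≤ I (fun _ => ⊤) ⊤
    rw [hI1]
  · intro f g
    have hmono : ∀ a b c : L, a ≤ b → mul c a ≤ mul c b := by
      intro a b c hab
      have : mul c b = mul c (sSup {a, b}) := by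
        rw [sSup_pair, sup_eq_right.mpr hab]
      rw [this, mul_sSup]
      exact le_iSup₂_of_le a (by simp) le_rfl
    rw [mul_sSup]
    apply iSup₂_le
    intro β hβ
    rw [mul_comm, mul_sSup]
    apply iSup₂_le
    intro α hα
    apply le_sSup
    show (fun x => mul (f x) (g x)) ≤ I (fun x => mul (f x) (g x)) (mul β α)
    rw [mul_comm β α]
    calc (fun x => mul (f x) (g x)) ≤ (fun x => mul (I f α x) (I g β x)) := by
          intro x
          calc mul (f x) (g x) ≤ mul (f x) (I g β x) := hmono _ _ _ (hβ x)
            _ = mul (I g β x) (f x) := mul_comm _ _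
            _ ≤ mul (I g β x) (I f α x) := hmono _ _ _ (hα x)
            _ = mul (I f α x) (I g β x) := mul_comm _ _
      _ ≤ I (fun x => mul (f x) (g x)) (mul α β) := hI3 f g α β
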